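/- arXiv:1910.11630 — 2 statements merged into one kernel-verified Lean document; each statement's English description precedes it below -/
import Mathlib

section
/- Let (E₀ = L₁ ⊕ L₂ ⊕ L₃, φ₀) be a type (1,1,1) Hodge bundle of rank 3 (so φ₀ sends L₁ → L₂⊗K and L₂ → L₃⊗K) with μ(L₁) - μ(L₃) > 2g-2, which is stable. Then μ(L₁) > μ(L₂) > μ(L₃). -/
/-- Abstract data of a type `(1,1,1)` Hodge bundle `(L₁⊕L₂⊕L₃, φ₀)` of rank 3
on a compact Riemann surface of genus `g ≥ 2`: the degrees `d₁, d₂, d₃` of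
the line bundles, the (non)vanishing of the Higgs components
`φ₂₁ : L₁ → L₂⊗K` and `φ₃₂ : L₂ → L₃⊗K`, and the degree bounds coming from a
nonzero map of line bundles `Lᵢ → Lⱼ ⊗ K` with `deg K = 2g-2`. -/
structure HodgeType111 where
  /-- The genus of the curve. -/
  g : ℕ
  hg : 2 ≤ g
  /-- Degrees of the line bundles `L₁, L₂, L₃`. -/
  d1 : ℤ
  d2 : ℤ
  d3 : ℤ
  /-- `φ₂₁ ≠ 0`. -/
  phi21_ne : Prop
  /-- `φ₃₂ ≠ 0`. -/
  phi32_ne : Prop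
  /-- A nonzero map `L₁ → L₂ ⊗ K` forces `d₁ ≤ d₂ + (2g-2)`. -/
  bound21 : phi21_ne → d1 ≤ d2 + (2 * (g : ℤ) - 2)
  /-- A nonzero map `L₂ → L₃ ⊗ K` forces `d₂ ≤ d₃ + (2g-2)`. -/
  bound32 : phi32_ne → d2 ≤ d3 + (2 * (g : ℤ) - 2)

namespace HodgeType111

/-- The slope `μ(E₀) = (d₁+d₂+d₃)/3`. -/
noncomputable def mu (H : HodgeType111) : ℚ := ((H.d1 + H.d2 + H.d3 : ℤ) : ℚ) / 3

end HodgeType111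

/-- Let `(E₀ = L₁⊕L₂⊕L₃, φ₀)` be a stable type `(1,1,1)` Hodge bundle with
`μ(L₁) - μ(L₃) > 2g-2`.  Then `μ(L₁) > μ(L₂) > μ(L₃)`.  Stability is imposed
on the `φ₀`-invariant subbundles: `L₃` and `L₂⊕L₃` are always `φ₀`-invariant;
`L₁` is `φ₀`-invariant when `φ₂₁ = 0` and `L₁⊕L₂` when `φ₃₂ = 0`. -/
theorem hodge_type111_slopes_strict (H : HodgeType111)
    (stab3 : (H.d3 : ℚ) < H.mu)
    (stab23 : ((H.d2 + H.d3 : ℤ) : ℚ) / 2 < H.mu)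
    (stab1 : ¬ H.phi21_ne → (H.d1 : ℚ) < H.mu)
    (stab12 : ¬ H.phi32_ne → ((H.d1 + H.d2 : ℤ) : ℚ) / 2 < H.mu)
    (hgap : (H.d1 : ℚ) - (H.d3 : ℚ) > 2 * (H.g : ℚ) - 2) :
    H.d1 > H.d2 ∧ H.d2 > H.d3 := by
  have h21 : H.phi21_ne := by
    by_contra h
    have h1 := stab1 h
    unfold HodgeType111.mu at h1 stab23
    push_cast at h1 stab23
    linarith
  have h32 : H.phi32_ne := by
    by_contra h
    have h1 := stab12 h
    unfold HodgeType111.mu at h1 stab3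
    push_cast at h1 stab3
    linarith
  have b1 := H.bound21 h21
  have b2 := H.bound32 h32
  have hgap' : H.d1 - H.d3 > 2 * (H.g : ℤ) - 2 := by exact_mod_cast hgap
  omega
end

section
/- Let v₁, …, v_n be unit vectors in S² ⊂ ℝ³ and suppose some vector v occurs among them with multiplicity i₀ > n/2. Then for every rotation-and-Möbius transform of the configuration induced by SL(2,ℂ) acting on ℙ¹ ≅ S², the sum of the resulting unit vectors is nonzero; moreover the infimum over the SL(2,ℂ)-orbit of the norm of the sum equals 2i₀ - n. -/
noncomputable section

open scoped Classical

open Matrix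

/-- The complex projective line `ℙ¹(ℂ)`. -/
abbrev ProjLine := Projectivization ℂ (Fin 2 → ℂ)

/-- The standard identification `ℙ¹(ℂ) ≅ S²`: `[z : w]` is sent to the unit
vector `(2 Re(z w̄), 2 Im(z w̄), |z|² - |w|²)/(|z|² + |w|²)` in `ℝ³`. -/
def toSphere (x : ProjLine) : EuclideanSpace ℝ (Fin 3) :=
  let z := x.rep 0
  let w := x.rep 1
  let s := Complex.normSq z + Complex.normSq w
  (WithLp.equiv 2 (Fin 3 → ℝ)).symm
    ![2 * (z * (starRingEnd ℂ) w).re / s, 2 * (z * (starRingEnd ℂ) w).im / s,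
      (Complex.normSq z - Complex.normSq w) / s]

/-- The Möbius action of `SL(2,ℂ)` on `ℙ¹(ℂ)`. -/
def mobius (g : Matrix.SpecialLinearGroup (Fin 2) ℂ) (x : ProjLine) : ProjLine :=
  Projectivization.mk ℂ ((g : Matrix (Fin 2) (Fin 2) ℂ).mulVec x.rep) (by
    intro h
    apply x.rep_nonzero
    have h2 : ((g⁻¹ : Matrix.SpecialLinearGroup (Fin 2) ℂ) :
        Matrix (Fin 2) (Fin 2) ℂ).mulVec
        (((g : Matrix.SpecialLinearGroup (Fin 2) ℂ) :
          Matrix (Fin 2) (Fin 2) ℂ).mulVec x.rep) = 0 := by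
      rw [h]; simp [Matrix.mulVec_zero]
    rwa [Matrix.mulVec_mulVec, ← Matrix.SpecialLinearGroup.coe_mul,
      inv_mul_cancel, Matrix.SpecialLinearGroup.coe_one, Matrix.one_mulVec] at h2)

/-!
All image points are unit vectors, so by the triangle inequality the `i₀` copies of the image
of `q` give a vector of length `i₀` that the remaining `n - i₀` unit vectors shorten by at
most `n - i₀`; in particular the sum never vanishes. Conversely, send `q` to `[1 : 0]` (the
north pole) by some `g ∈ SL(2,ℂ)` and follow with `diag(eᵗ, e⁻ᵗ)`: as `t → -∞` every point
whose image under `g` has nonzero second coordinate, i.e. every point other than `q`, flows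
to `[0 : 1]` (the south pole), so the sum tends to `2i₀ - n` times the north pole.
-/

open Filter Topology Finset
open scoped MatrixGroups ComplexConjugate

section NormedSpace

variable {ι E : Type*} [Fintype ι] [NormedAddCommGroup E] [NormedSpace ℝ E]

lemma two_mul_card_sub_card_le_norm_sum (f : ι → E) (s : Finset ι) {u : E} (hu : ‖u‖ = 1)
    (hs : ∀ i ∈ s, f i = u) (hf : ∀ i ∉ s, ‖f i‖ ≤ 1) :
    2 * (#s : ℝ) - Fintype.card ι ≤ ‖∑ i, f i‖ := by
  have hin : ‖∑ i ∈ s, f i‖ = #s := by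
    rw [sum_congr rfl hs, sum_const, RCLike.norm_nsmul ℝ, hu, nsmul_eq_mul, mul_one]
  have hout : ‖∑ i ∈ sᶜ, f i‖ ≤ Fintype.card ι - #s :=
    calc ‖∑ i ∈ sᶜ, f i‖ ≤ ∑ i ∈ sᶜ, ‖f i‖ := norm_sum_le _ _
      _ ≤ ∑ _i ∈ sᶜ, (1 : ℝ) := sum_le_sum fun i hi => hf i (mem_compl.mp hi)
      _ = Fintype.card ι - #s := by
        rw [sum_const, card_compl, nsmul_one, Nat.cast_sub (card_le_univ s)]
  calc 2 * (#s : ℝ) - Fintype.card ι ≤ ‖∑ i ∈ s, f i‖ - ‖∑ i ∈ sᶜ, f i‖ := by linarith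
    _ ≤ ‖∑ i ∈ s, f i + ∑ i ∈ sᶜ, f i‖ := norm_sub_le_norm_add _ _
    _ = ‖∑ i, f i‖ := by rw [sum_add_sum_compl]

lemma norm_sum_ite_neg (P : ι → Prop) [DecidablePred P] (u : E) :
    ‖∑ i, if P i then u else -u‖ = |2 * (#{i | P i} : ℝ) - Fintype.card ι| * ‖u‖ := by
  have hcard := card_filter_add_card_filter_not (s := univ) P
  rw [card_univ] at hcard
  rw [sum_ite, sum_const, sum_const, smul_neg, ← sub_eq_add_neg, ← Nat.cast_smul_eq_nsmul ℝ,
    ← Nat.cast_smul_eq_nsmul ℝ, ← sub_smul, norm_smul, Real.norm_eq_abs, ← hcard]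
  push_cast
  ring_nf

end NormedSpace

def hopf (v : Fin 2 → ℂ) : EuclideanSpace ℝ (Fin 3) :=
  let z := v 0
  let w := v 1
  let s := Complex.normSq z + Complex.normSq w
  (WithLp.equiv 2 (Fin 3 → ℝ)).symm
    ![2 * (z * conj w).re / s, 2 * (z * conj w).im / s,
      (Complex.normSq z - Complex.normSq w) / s]

lemma toSphere_eq_hopf (x : ProjLine) : toSphere x = hopf x.rep := rfl

lemma normSq_add_normSq_ne_zero {v : Fin 2 → ℂ} (hv : v ≠ 0) :
    Complex.normSq (v 0) + Complex.normSq (v 1) ≠ 0 := by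
  rw [Ne, add_eq_zero_iff_of_nonneg (Complex.normSq_nonneg _) (Complex.normSq_nonneg _)]
  refine fun h => hv (funext fun i => ?_)
  fin_cases i
  exacts [Complex.normSq_eq_zero.mp h.1, Complex.normSq_eq_zero.mp h.2]

lemma hopf_smul {c : ℂ} (hc : c ≠ 0) (v : Fin 2 → ℂ) : hopf (c • v) = hopf v := by
  have hk : Complex.normSq c ≠ 0 := Complex.normSq_eq_zero.not.mpr hc
  have hprod : c * v 0 * conj (c * v 1) = (Complex.normSq c : ℂ) * (v 0 * conj (v 1)) := by
    rw [map_mul, ← Complex.mul_conj]; ring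
  simp only [hopf, Pi.smul_apply, smul_eq_mul, Complex.normSq_mul, hprod,
    Complex.re_ofReal_mul, Complex.im_ofReal_mul, ← mul_add, ← mul_sub, mul_left_comm (2 : ℝ),
    mul_div_mul_left _ _ hk]

lemma toSphere_mk (v : Fin 2 → ℂ) (hv : v ≠ 0) :
    toSphere (Projectivization.mk ℂ v hv) = hopf v := by
  obtain ⟨a, ha⟩ :=
    (Projectivization.mk_eq_mk_iff ℂ _ _ (Projectivization.rep_nonzero _) hv).mp
      (Projectivization.mk_rep _)
  rw [toSphere_eq_hopf, ← ha, Units.smul_def, hopf_smul a.ne_zero]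

lemma toSphere_mobius (g : SL(2, ℂ)) (x : ProjLine) :
    toSphere (mobius g x) = hopf ((g : Matrix (Fin 2) (Fin 2) ℂ) *ᵥ x.rep) :=
  toSphere_mk _ _

lemma norm_hopf {v : Fin 2 → ℂ} (hv : v ≠ 0) : ‖hopf v‖ = 1 := by
  have hs := normSq_add_normSq_ne_zero hv
  rw [EuclideanSpace.norm_eq, Real.sqrt_eq_one, Fin.sum_univ_three]
  simp only [hopf, WithLp.equiv_symm_apply, PiLp.toLp_apply, Matrix.cons_val_zero,
    Matrix.cons_val_one, Matrix.cons_val_two, Matrix.head_cons, Matrix.tail_cons,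
    Real.norm_eq_abs, sq_abs]
  field_simp
  simp only [Complex.normSq_apply, Complex.mul_re, Complex.mul_im, Complex.conj_re,
    Complex.conj_im]
  ring

lemma norm_toSphere (x : ProjLine) : ‖toSphere x‖ = 1 :=
  norm_hopf x.rep_nonzero

lemma continuousAt_hopf {v : Fin 2 → ℂ} (hv : v ≠ 0) : ContinuousAt hopf v := by
  have hs := normSq_add_normSq_ne_zero hv
  refine (PiLp.continuous_toLp 2 _).continuousAt.comp (continuousAt_pi.2 fun i => ?_)
  fin_cases i <;> exact ContinuousAt.div (by fun_prop) (by fun_prop) hs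

def north : EuclideanSpace ℝ (Fin 3) := EuclideanSpace.single 2 1

lemma hopf_vecCons_zero {z : ℂ} (hz : z ≠ 0) : hopf ![z, 0] = north := by
  ext i
  fin_cases i <;> simp [hopf, north, Complex.normSq_eq_zero.not.mpr hz]

lemma hopf_zero_vecCons {w : ℂ} (hw : w ≠ 0) : hopf ![0, w] = -north := by
  ext i
  fin_cases i <;> simp [hopf, north, Complex.normSq_eq_zero.not.mpr hw]

def diagSL (t : ℝ) : SL(2, ℂ) :=
  ⟨!![Complex.exp t, 0; 0, Complex.exp (-t)], by
    rw [Matrix.det_fin_two_of, ← Complex.exp_add]; simp⟩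

lemma hopf_diagSL_mulVec (t : ℝ) (w : Fin 2 → ℂ) :
    hopf ((diagSL t : Matrix (Fin 2) (Fin 2) ℂ) *ᵥ w)
      = hopf ![Complex.exp (2 * t) * w 0, w 1] := by
  have h : (diagSL t : Matrix (Fin 2) (Fin 2) ℂ) *ᵥ w
      = Complex.exp (-t) • ![Complex.exp (2 * t) * w 0, w 1] := by
    have he : Complex.exp t = Complex.exp (-t) * Complex.exp (2 * t) := by
      rw [← Complex.exp_add]; ring_nf
    ext i
    fin_cases i <;> simp [diagSL, Matrix.mulVec, dotProduct, ← mul_assoc, ← he]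
  rw [h, hopf_smul (Complex.exp_ne_zero _)]

lemma tendsto_hopf_diagSL_mulVec {w : Fin 2 → ℂ} (hw : w 1 ≠ 0) :
    Tendsto (fun t => hopf ((diagSL t : Matrix (Fin 2) (Fin 2) ℂ) *ᵥ w)) atBot
      (𝓝 (-north)) := by
  have hexp : Tendsto (fun t : ℝ => Complex.exp (2 * t)) atBot (𝓝 0) := by
    have := (Complex.continuous_ofReal.tendsto 0).comp
      (Real.tendsto_exp_atBot.comp (tendsto_id.const_mul_atBot two_pos))
    simpa [Function.comp_def, Complex.ofReal_exp] using this
  have hlim : Tendsto (fun t : ℝ => ![Complex.exp (2 * t) * w 0, w 1]) atBot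
      (𝓝 ![0, w 1]) := by
    refine tendsto_pi_nhds.2 fun i => ?_
    fin_cases i
    · simpa using hexp.mul_const (w 0)
    · exact tendsto_const_nhds
  have h0 : (![0, w 1] : Fin 2 → ℂ) ≠ 0 := fun h => hw (by simpa using congrFun h 1)
  simp only [hopf_diagSL_mulVec]
  rw [← hopf_zero_vecCons hw]
  exact (continuousAt_hopf h0).tendsto.comp hlim

lemma exists_mulVec_eq {v : Fin 2 → ℂ} (hv : v ≠ 0) :
    ∃ g : SL(2, ℂ), (g : Matrix (Fin 2) (Fin 2) ℂ) *ᵥ v = ![1, 0] := by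
  set s : ℂ := ((Complex.normSq (v 0) + Complex.normSq (v 1) : ℝ) : ℂ)
  have hs : s ≠ 0 := Complex.ofReal_ne_zero.mpr (normSq_add_normSq_ne_zero hv)
  have hs' : conj (v 0) * v 0 + conj (v 1) * v 1 = s := by
    simp only [s, Complex.ofReal_add, ← Complex.mul_conj, mul_comm (v _)]
  refine ⟨⟨!![conj (v 0) / s, conj (v 1) / s; -v 1, v 0], ?_⟩, ?_⟩
  · rw [Matrix.det_fin_two_of, ← div_self hs, ← hs']; ring
  · ext i
    fin_cases i
    · simp [Matrix.mulVec, dotProduct, div_mul_eq_mul_div, ← add_div, hs', hs]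
    · simp [Matrix.mulVec, dotProduct, mul_comm]

lemma mulVec_rep_one_ne_zero {g : SL(2, ℂ)} {q x : ProjLine}
    (hq : (g : Matrix (Fin 2) (Fin 2) ℂ) *ᵥ q.rep = ![1, 0]) (hx : x ≠ q) :
    ((g : Matrix (Fin 2) (Fin 2) ℂ) *ᵥ x.rep) 1 ≠ 0 := by
  intro h1
  set c := ((g : Matrix (Fin 2) (Fin 2) ℂ) *ᵥ x.rep) 0
  have hinj := Matrix.mulVec_injective_of_det_ne_zero (M := (g : Matrix (Fin 2) (Fin 2) ℂ))
    (by simp)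
  have hx' : x.rep = c • q.rep := hinj <| by
    rw [Matrix.mulVec_smul, hq]
    ext i; fin_cases i <;> simp [c, h1]
  apply hx
  rw [← Projectivization.mk_rep x, ← Projectivization.mk_rep q]
  exact (Projectivization.mk_eq_mk_iff' ℂ _ _ _ _).mpr ⟨c, hx'.symm⟩

lemma tendsto_sum_toSphere_mobius {ι : Type*} [Fintype ι] (p : ι → ProjLine) {q : ProjLine}
    {g : SL(2, ℂ)} (hq : (g : Matrix (Fin 2) (Fin 2) ℂ) *ᵥ q.rep = ![1, 0]) :
    Tendsto (fun t => ∑ i, toSphere (mobius (diagSL t * g) (p i))) atBot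
      (𝓝 (∑ i, if p i = q then north else -north)) := by
  refine tendsto_finsetSum _ fun i _ => ?_
  have hmul (t : ℝ) : toSphere (mobius (diagSL t * g) (p i)) =
      hopf ((diagSL t : Matrix (Fin 2) (Fin 2) ℂ) *ᵥ
        ((g : Matrix (Fin 2) (Fin 2) ℂ) *ᵥ (p i).rep)) := by
    rw [toSphere_mobius, Matrix.SpecialLinearGroup.coe_mul, mulVec_mulVec]
  simp only [hmul]
  split_ifs with h
  · simp only [h, hq, hopf_diagSL_mulVec, Matrix.cons_val_zero, Matrix.cons_val_one, mul_one,
      hopf_vecCons_zero (Complex.exp_ne_zero _)]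
    exact tendsto_const_nhds
  · exact tendsto_hopf_diagSL_mulVec (mulVec_rep_one_ne_zero hq h)

/-- Let `p` be a configuration of `n` points on `ℙ¹ ≅ S²` (equivalently `n`
unit vectors in `S²`) in which some point `q` occurs with multiplicity
`i₀ > n/2`.  Then for every transform of the configuration by `SL(2,ℂ)`
(acting by Möbius transformations on `ℙ¹ ≅ S²`), the sum of the resulting
unit vectors is nonzero; moreover the infimum over the `SL(2,ℂ)`-orbit of
the norm of the sum — the moment map `μ(v₁,…,v_n) = v₁ + ⋯ + v_n` for the
`SO(3)`-action — equals `2i₀ - n`. -/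
theorem unstable_configuration_moment_infimum (n : ℕ) (p : Fin n → ProjLine)
    (q : ProjLine) (i0 : ℕ)
    (hi0 : i0 = (Finset.univ.filter fun i => p i = q).card)
    (hbig : 2 * i0 > n) :
    (∀ g : Matrix.SpecialLinearGroup (Fin 2) ℂ,
      (∑ i, toSphere (mobius g (p i))) ≠ 0) ∧
    IsGLB {r : ℝ | ∃ g : Matrix.SpecialLinearGroup (Fin 2) ℂ,
        r = ‖∑ i, toSphere (mobius g (p i))‖} ((2 * i0 : ℝ) - n) := by
  have hlower (g : SL(2, ℂ)) : (2 * i0 : ℝ) - n ≤ ‖∑ i, toSphere (mobius g (p i))‖ := by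
    simpa [← hi0] using
      two_mul_card_sub_card_le_norm_sum (fun i => toSphere (mobius g (p i)))
      (univ.filter fun i => p i = q) (norm_toSphere (mobius g q))
      (fun i hi => by rw [(mem_filter.mp hi).2]) (fun i _ => (norm_toSphere _).le)
  have hpos : (0 : ℝ) < 2 * i0 - n := sub_pos.mpr (by exact_mod_cast hbig)
  obtain ⟨g, hg⟩ := exists_mulVec_eq q.rep_nonzero
  have hlim := (tendsto_sum_toSphere_mobius p hg).norm
  rw [norm_sum_ite_neg, north, PiLp.norm_single, norm_one, mul_one, Fintype.card_fin, ← hi0,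
    abs_of_pos hpos] at hlim
  refine ⟨fun g h => ?_, fun r ⟨g, hr⟩ => hr ▸ hlower g,
    fun b hb => ge_of_tendsto' hlim fun t => hb ⟨_, rfl⟩⟩
  have := hlower g
  rw [h, norm_zero] at this
  linarith
end
end
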